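/- arXiv:1605.05939 — 9 statements merged into one kernel-verified Lean document; each statement's English description precedes it below -/
import Mathlib

section
/- If T is a subset of ℤ/nℤ that admits a formally dual set S (i.e., for all y ∈ ℤ/nℤ, (|S|²/|T|)·ν_T(y) = Σ_{v ∈ ℤ/nℤ} ν_S(v)·ζ_n^{vy} where ζ_n = exp(2πi/n)), then the weight enumerator of T satisfies ν_T(y) = ν_T(gcd(y,n)) for all y ∈ ℤ/nℤ. -/
open Finset Complex

/-- Weight enumerator: number of ordered pairs in `S × S` with difference `y`. -/
def nuW {n : ℕ} [NeZero n] (S : Finset (ZMod n)) (y : ZMod n) : ℕ :=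
  ((S ×ˢ S).filter (fun p => p.1 - p.2 = y)).card

/-- `n`-th root of unity `ζ_n = exp(2πi/n)`. -/
noncomputable def zetaC (n : ℕ) : ℂ := Complex.exp (2 * Real.pi * Complex.I / n)

/-- Formal duality of `S, T ⊆ ℤ/nℤ` (both directions). -/
def IsFormallyDual {n : ℕ} [NeZero n] (S T : Finset (ZMod n)) : Prop :=
  S.Nonempty ∧ T.Nonempty ∧
  (∀ y : ZMod n, ((S.card : ℂ) ^ 2 / (T.card : ℂ)) * (nuW T y : ℂ) =
    ∑ v : ZMod n, (nuW S v : ℂ) * zetaC n ^ (v.val * y.val)) ∧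
  (∀ y : ZMod n, ((T.card : ℂ) ^ 2 / (S.card : ℂ)) * (nuW S y : ℂ) =
    ∑ v : ZMod n, (nuW T v : ℂ) * zetaC n ^ (v.val * y.val))
/-!
By duality, `(|S|²/|T|) ν_T(y)` is the value at `ζ^y` of the rational polynomial
`P = ∑ ν_S(v) X^v`. The roots of unity `ζ^y` and `ζ^gcd(y,n)` have the same order
`n / gcd(y,n)`, hence the same minimal polynomial over `ℚ` (a cyclotomic polynomial), and a
rational polynomial taking a rational value at one of two conjugates takes it at the other.
-/

open Polynomial

theorem aeval_eq_algebraMap_of_minpoly_eq {F A : Type*} [Field F] [Ring A] [Algebra F A]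
    {x₁ x₂ : A} (h : minpoly F x₁ = minpoly F x₂) {P : F[X]} {q : F}
    (hP : aeval x₁ P = algebraMap F A q) : aeval x₂ P = algebraMap F A q := by
  have hdvd : minpoly F x₂ ∣ P - C q := h ▸ minpoly.dvd F x₁ (by simp [hP])
  simpa [sub_eq_zero] using aeval_eq_zero_of_dvd_aeval_eq_zero hdvd (minpoly.aeval F x₂)

theorem minpoly_rat_eq_of_orderOf_eq {K : Type*} [Field K] [CharZero K] {ω₁ ω₂ : K}
    (hfin : IsOfFinOrder ω₁) (hord : orderOf ω₁ = orderOf ω₂) :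
    minpoly ℚ ω₁ = minpoly ℚ ω₂ := by
  have hpos : 0 < orderOf ω₁ := hfin.orderOf_pos
  rw [← cyclotomic_eq_minpoly_rat (IsPrimitiveRoot.orderOf ω₁) hpos, hord,
    ← cyclotomic_eq_minpoly_rat (IsPrimitiveRoot.orderOf ω₂) (hord ▸ hpos)]

theorem Nat.gcd_gcd_mod_eq_gcd (a n : ℕ) : Nat.gcd n (Nat.gcd a n % n) = Nat.gcd n a := by
  rw [Nat.gcd_comm n, ← Nat.gcd_rec, Nat.gcd_eq_right (Nat.gcd_dvd_right a n), Nat.gcd_comm]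

section WeightPoly

variable {n : ℕ} [NeZero n]

noncomputable def weightPoly (S : Finset (ZMod n)) : ℚ[X] :=
  ∑ v : ZMod n, C (nuW S v : ℚ) * X ^ v.val

theorem aeval_weightPoly (S : Finset (ZMod n)) (x : ℂ) :
    aeval x (weightPoly S) = ∑ v : ZMod n, (nuW S v : ℂ) * x ^ v.val := by
  simp [weightPoly, map_sum]

end WeightPoly

theorem stmt0 (n : ℕ) [NeZero n] (S T : Finset (ZMod n))
    (hS : S.Nonempty) (hT : T.Nonempty)
    (hdual : ∀ y : ZMod n, ((S.card : ℂ) ^ 2 / (T.card : ℂ)) * (nuW T y : ℂ) =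
      ∑ v : ZMod n, (nuW S v : ℂ) * zetaC n ^ (v.val * y.val)) :
    ∀ y : ZMod n, nuW T y = nuW T ((Nat.gcd y.val n : ZMod n)) := by
  intro y
  set ζ := zetaC n
  have hζ : IsPrimitiveRoot ζ n := by
    simpa [ζ, zetaC] using Complex.isPrimitiveRoot_exp n (NeZero.ne n)
  have hζfin : IsOfFinOrder ζ := hζ.isOfFinOrder (NeZero.ne n)
  set c : ℚ := (S.card : ℚ) ^ 2 / T.card
  have hc : c ≠ 0 := div_ne_zero (pow_ne_zero 2 (by simpa using hS.ne_empty))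
    (by simpa using hT.ne_empty)
  have hfourier : ∀ z : ZMod n,
      aeval (ζ ^ z.val) (weightPoly S) = algebraMap ℚ ℂ (c * nuW T z) := by
    intro z
    simp only [aeval_weightPoly, eq_ratCast, ← pow_mul, mul_comm z.val, ← hdual z, c]
    push_cast
    rfl
  have hord : orderOf (ζ ^ y.val) = orderOf (ζ ^ (Nat.gcd y.val n : ZMod n).val) := by
    rw [hζfin.orderOf_pow, hζfin.orderOf_pow, ← hζ.eq_orderOf, ZMod.val_natCast,
      Nat.gcd_gcd_mod_eq_gcd]
  have hgcd := aeval_eq_algebraMap_of_minpoly_eq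
    (minpoly_rat_eq_of_orderOf_eq hζfin.pow hord) (hfourier y)
  rw [hfourier, (algebraMap ℚ ℂ).injective.eq_iff, mul_right_inj' hc] at hgcd
  exact_mod_cast hgcd.symm
end

section
/- For n ≥ 1 and divisors d, e of n, the generalized Ramanujan sum C_n(d,e) := Σ_{v ∈ ℤ/nℤ, gcd(v,n)=e} ζ_n^{dv} equals Σ_{g | gcd(d, n/e)} μ((n/e)/g)·g. -/
/-!
Writing `v = e * w`, the sum over `gcd(v, n) = e` becomes the classical Ramanujan sum
`c_m(d)`, `m = n / e`, for the primitive `m`-th root `ζ^e`. In `c_m(d)` Möbius inversion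
replaces the condition `gcd(w, m) = 1` by `∑_{k ∣ gcd(w, m)} μ(k)`; the inner sum over the
multiples `w = k * u` is then a full geometric sum of the primitive `(m/k)`-th root `ζ^k`,
which is `m/k` or `0` according as `m/k` divides `d` or not.
-/

open Finset Complex

open ArithmeticFunction (moebius)

theorem sum_divisors_moebius_eq_ite {R : Type*} [Ring R] (x : ℕ) :
    ∑ k ∈ x.divisors, (moebius k : R) = if x = 1 then 1 else 0 := by
  have h := congrArg (· x) (ArithmeticFunction.coe_moebius_mul_coe_zeta (R := R))
  simpa only [ArithmeticFunction.coe_mul_zeta_apply, ArithmeticFunction.intCoe_apply,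
    ArithmeticFunction.one_apply] using h

theorem Nat.divisors_gcd_eq_filter (a : ℕ) {m : ℕ} (hm : m ≠ 0) :
    (a.gcd m).divisors = {k ∈ m.divisors | k ∣ a} := by
  ext k
  simp only [Nat.mem_divisors, mem_filter, Nat.dvd_gcd_iff, ne_eq, Nat.gcd_eq_zero_iff, hm,
    not_false_eq_true, and_false, and_true]
  exact and_comm

theorem Finset.sum_range_mul_filter_dvd {M : Type*} [AddCommMonoid M] {k : ℕ} (hk : k ≠ 0)
    (t : ℕ) (f : ℕ → M) : ∑ i ∈ range (k * t) with k ∣ i, f i = ∑ j ∈ range t, f (k * j) := by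
  have hfilter : {i ∈ range (k * t) | k ∣ i} = (range t).image (k * ·) := by
    ext i
    simp only [mem_filter, mem_range, mem_image]
    constructor
    · rintro ⟨hi, j, rfl⟩
      exact ⟨j, lt_of_mul_lt_mul_left hi k.zero_le, rfl⟩
    · rintro ⟨j, hj, rfl⟩
      exact ⟨by gcongr, dvd_mul_right k j⟩
  rw [hfilter, sum_image fun i _ j _ h => Nat.eq_of_mul_eq_mul_left (Nat.pos_of_ne_zero hk) h]

theorem ZMod.sum_val_eq_sum_range {M : Type*} [AddCommMonoid M] (n : ℕ) [NeZero n]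
    (f : ℕ → M) : ∑ v : ZMod n, f v.val = ∑ i ∈ range n, f i := by
  obtain ⟨k, rfl⟩ := Nat.exists_eq_succ_of_ne_zero (NeZero.ne n)
  exact Fin.sum_univ_eq_sum_range f _

/-- The paper's `C_n(d, e)` with `ζ` in place of `ζ_n`, and `v` running over `range n`. -/
noncomputable def ramanujanSum {R : Type*} [CommRing R] (ζ : R) (n d e : ℕ) : R :=
  ∑ i ∈ range n with i.gcd n = e, ζ ^ (d * i)

theorem ramanujanSum_mul_left {R : Type*} [CommRing R] (ζ : R) {e : ℕ} (he : e ≠ 0) (m d : ℕ) :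
    ramanujanSum ζ (e * m) d e = ramanujanSum (ζ ^ e) m d 1 := by
  have hfilter : {i ∈ range (e * m) | i.gcd (e * m) = e} =
      {i ∈ {i ∈ range (e * m) | e ∣ i} | i.gcd (e * m) = e} := by
    rw [filter_filter]
    exact filter_congr fun i _ => ⟨fun h => ⟨h ▸ Nat.gcd_dvd_left i (e * m), h⟩, And.right⟩
  rw [ramanujanSum, hfilter, sum_filter, sum_range_mul_filter_dvd he, ramanujanSum, sum_filter]
  refine sum_congr rfl fun j _ => ?_
  simp only [Nat.gcd_mul_left, Nat.mul_eq_left he, ← pow_mul, mul_left_comm]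

namespace IsPrimitiveRoot

variable {R : Type*} [CommRing R] [IsDomain R] {ζ : R} {m : ℕ}

theorem sum_range_pow_mul (hζ : IsPrimitiveRoot ζ m) (d : ℕ) :
    ∑ i ∈ range m, ζ ^ (d * i) = if m ∣ d then (m : R) else 0 := by
  simp_rw [pow_mul]
  split_ifs with hd
  · simp [(hζ.pow_eq_one_iff_dvd d).2 hd]
  · have hne : ζ ^ d - 1 ≠ 0 := sub_ne_zero.2 fun h => hd ((hζ.pow_eq_one_iff_dvd d).1 h)
    have hpow : (ζ ^ d) ^ m = 1 := by rw [← pow_mul, mul_comm, pow_mul, hζ.pow_eq_one, one_pow]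
    apply mul_left_cancel₀ hne
    rw [mul_geom_sum, hpow, sub_self, mul_zero]

theorem sum_range_filter_dvd_pow_mul (hζ : IsPrimitiveRoot ζ m) (hm : m ≠ 0) {k : ℕ}
    (hk : k ∣ m) (d : ℕ) :
    ∑ i ∈ range m with k ∣ i, ζ ^ (d * i) = if m / k ∣ d then ((m / k : ℕ) : R) else 0 := by
  have hk0 : k ≠ 0 := ne_zero_of_dvd_ne_zero hm hk
  conv_lhs => rw [← Nat.mul_div_cancel' hk]
  rw [sum_range_mul_filter_dvd hk0, ← (hζ.pow_of_dvd hk0 hk).sum_range_pow_mul d]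
  refine sum_congr rfl fun j _ => ?_
  rw [← pow_mul, mul_left_comm]

theorem ramanujanSum_one_eq (hζ : IsPrimitiveRoot ζ m) (hm : m ≠ 0) (d : ℕ) :
    ramanujanSum ζ m d 1 = ∑ g ∈ (d.gcd m).divisors, (moebius (m / g) : R) * g := by
  calc ramanujanSum ζ m d 1
      = ∑ i ∈ range m, (∑ k ∈ m.divisors with k ∣ i, (moebius k : R)) * ζ ^ (d * i) := by
        rw [ramanujanSum, sum_filter]
        refine sum_congr rfl fun i _ => ?_
        rw [← Nat.divisors_gcd_eq_filter i hm, sum_divisors_moebius_eq_ite]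
        split_ifs <;> simp
    _ = ∑ k ∈ m.divisors, (moebius k : R) * ∑ i ∈ range m with k ∣ i, ζ ^ (d * i) := by
        simp_rw [sum_filter, sum_mul, mul_sum, ite_mul, mul_ite, zero_mul, mul_zero]
        exact sum_comm
    _ = ∑ k ∈ m.divisors, (moebius k : R) * if m / k ∣ d then ((m / k : ℕ) : R) else 0 :=
        sum_congr rfl fun k hk => by
          rw [hζ.sum_range_filter_dvd_pow_mul hm (Nat.dvd_of_mem_divisors hk)]
    _ = ∑ g ∈ m.divisors, (moebius (m / g) : R) * if g ∣ d then (g : R) else 0 := by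
        rw [← Nat.sum_div_divisors]
        exact sum_congr rfl fun g hg => by rw [Nat.div_div_self (Nat.dvd_of_mem_divisors hg) hm]
    _ = ∑ g ∈ (d.gcd m).divisors, (moebius (m / g) : R) * g := by
        rw [Nat.divisors_gcd_eq_filter d hm, sum_filter]
        simp_rw [mul_ite, mul_zero]

theorem ramanujanSum_eq (hζ : IsPrimitiveRoot ζ m) (hm : m ≠ 0) {e : ℕ} (he : e ∣ m) (d : ℕ) :
    ramanujanSum ζ m d e =
      ∑ g ∈ (d.gcd (m / e)).divisors, (moebius (m / e / g) : R) * g := by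
  obtain ⟨k, rfl⟩ := he
  have he0 : e ≠ 0 := left_ne_zero_of_mul hm
  rw [ramanujanSum_mul_left ζ he0, Nat.mul_div_cancel_left k (Nat.pos_of_ne_zero he0)]
  exact (hζ.pow (Nat.pos_of_ne_zero hm) rfl).ramanujanSum_one_eq (right_ne_zero_of_mul hm) d

end IsPrimitiveRoot

theorem stmt2_general (n d e : ℕ) [NeZero n] (he : e ∣ n) :
    ∑ v ∈ Finset.univ.filter (fun v : ZMod n => Nat.gcd v.val n = e), zetaC n ^ (d * v.val) =
      ∑ g ∈ (Nat.gcd d (n / e)).divisors, (ArithmeticFunction.moebius ((n / e) / g) : ℂ) * (g : ℂ) := by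
  have hn := NeZero.ne n
  calc _ = ramanujanSum (zetaC n) n d e := by
        rw [ramanujanSum, sum_filter, sum_filter,
          ← ZMod.sum_val_eq_sum_range n fun i => if i.gcd n = e then zetaC n ^ (d * i) else 0]
    _ = _ := (Complex.isPrimitiveRoot_exp n hn).ramanujanSum_eq hn he d

theorem stmt2 (n d e : ℕ) (hn : 1 ≤ n) [NeZero n] (hd : d ∣ n) (he : e ∣ n) :
    ∑ v ∈ Finset.univ.filter (fun v : ZMod n => Nat.gcd v.val n = e), zetaC n ^ (d * v.val) =
      ∑ g ∈ (Nat.gcd d (n / e)).divisors, (ArithmeticFunction.moebius ((n / e) / g) : ℂ) * (g : ℂ) :=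
  stmt2_general n d e he
end

section
/- Let S, T ⊆ ℤ/nℤ be formally dual subsets. Then for every y ∈ ℤ/nℤ, (|S|²/|T|)·ν_T(y) = Σ_{e | n} C_n(gcd(y,n), e)·ν_S(e), where C_n(d,e) = Σ_{v ∈ ℤ/nℤ, gcd(v,n)=e} ζ_n^{dv}. -/
open Finset Complex

open Polynomial

lemma zetaC_pow_congr (n : ℕ) (hn : n ≠ 0) {a b : ℕ} (hab : a ≡ b [MOD n]) :
    zetaC n ^ a = zetaC n ^ b := by
  have hζ : zetaC n ^ n = 1 := (Complex.isPrimitiveRoot_exp n hn).pow_eq_one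
  conv_lhs => rw [← Nat.div_add_mod a n]
  conv_rhs => rw [← Nat.div_add_mod b n]
  rw [pow_add, pow_add, pow_mul, pow_mul, hζ, one_pow, one_pow,
    show a % n = b % n from hab]

lemma zetaC_pow_prim (n : ℕ) (hn : n ≠ 0) (a : ℕ) :
    IsPrimitiveRoot (zetaC n ^ a) (n / Nat.gcd a n) := by
  have hζ := Complex.isPrimitiveRoot_exp n hn
  rcases Nat.eq_zero_or_pos a with rfl | ha
  · simpa [Nat.gcd_zero_left, Nat.div_self (Nat.pos_of_ne_zero hn)] using IsPrimitiveRoot.one (M₀ := ℂ)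
  · have h := IsPrimitiveRoot.orderOf (zetaC n ^ a)
    have ho : orderOf (zetaC n) = n := hζ.eq_orderOf.symm
    rwa [orderOf_pow' _ ha.ne', ho, Nat.gcd_comm] at h

lemma aeval_eq_of_minpoly_eq {ξ ξ' : ℂ} (hmin : minpoly ℚ ξ = minpoly ℚ ξ')
    (P : ℚ[X]) (q : ℚ) (hq : aeval ξ P = algebraMap ℚ ℂ q) :
    aeval ξ' P = algebraMap ℚ ℂ q := by
  have h0 : aeval ξ (P - C q) = 0 := by
    rw [map_sub, hq, aeval_C, sub_self]
  obtain ⟨R, hR⟩ := minpoly.dvd ℚ ξ h0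
  have h1 : aeval ξ' (P - C q) = 0 := by
    rw [hR, map_mul, hmin, minpoly.aeval, zero_mul]
  rw [map_sub, aeval_C, sub_eq_zero] at h1
  exact h1

lemma galois_inv (n : ℕ) (hn : n ≠ 0) {a b : ℕ}
    (hab : Nat.gcd a n = Nat.gcd b n) (P : ℚ[X]) (q : ℚ)
    (hq : aeval (zetaC n ^ a) P = algebraMap ℚ ℂ q) :
    aeval (zetaC n ^ b) P = algebraMap ℚ ℂ q := by
  have ha := zetaC_pow_prim n hn a
  have hb := zetaC_pow_prim n hn b
  have hpos : 0 < n / Nat.gcd a n :=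
    Nat.div_pos (Nat.le_of_dvd (Nat.pos_of_ne_zero hn) (Nat.gcd_dvd_right a n))
      (Nat.gcd_pos_of_pos_right a (Nat.pos_of_ne_zero hn))
  have hmin : minpoly ℚ (zetaC n ^ a) = minpoly ℚ (zetaC n ^ b) := by
    rw [← Polynomial.cyclotomic_eq_minpoly_rat ha hpos, hab,
      Polynomial.cyclotomic_eq_minpoly_rat hb (hab ▸ hpos)]
  exact aeval_eq_of_minpoly_eq hmin P q hq

lemma gcd_mod_left' (x n : ℕ) : Nat.gcd (x % n) n = Nat.gcd x n := by
  rw [← Nat.gcd_rec, Nat.gcd_comm]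

lemma exists_coprime_lift {k n : ℕ} (hk : k ∣ n) (hn : n ≠ 0) {m : ℕ}
    (hm : Nat.Coprime m k) : ∃ m' : ℕ, Nat.Coprime m' n ∧ m' ≡ m [MOD k] := by
  haveI : NeZero n := ⟨hn⟩
  obtain ⟨u, hu⟩ := ZMod.unitsMap_surjective hk (ZMod.unitOfCoprime m hm)
  refine ⟨(u : ZMod n).val, ZMod.val_coe_unit_coprime u, ?_⟩
  rw [← ZMod.natCast_eq_natCast_iff]
  have : ((u : ZMod n).val : ZMod k) = ZMod.castHom hk (ZMod k) (u : ZMod n) := by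
    rw [ZMod.castHom_apply, ZMod.natCast_val]
  rw [this]
  have h2 : (ZMod.unitsMap hk u : ZMod k) = ((ZMod.unitOfCoprime m hm : (ZMod k)ˣ) : ZMod k) := by
    rw [hu]
  rw [ZMod.unitsMap] at h2
  simpa [ZMod.coe_unitOfCoprime] using h2

lemma gcd_val_unit_mul {n : ℕ} [NeZero n] (u : (ZMod n)ˣ) (v : ZMod n) :
    Nat.gcd ((↑u * v).val) n = Nat.gcd v.val n := by
  rw [ZMod.val_mul, gcd_mod_left',
    Nat.Coprime.gcd_mul_left_cancel _ (ZMod.val_coe_unit_coprime u)]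

lemma fiber_sum {n : ℕ} [NeZero n] (y : ZMod n) (e : ℕ) :
    ∑ v ∈ Finset.univ.filter (fun v : ZMod n => Nat.gcd v.val n = e),
      zetaC n ^ (Nat.gcd y.val n * v.val)
    = ∑ v ∈ Finset.univ.filter (fun v : ZMod n => Nat.gcd v.val n = e),
      zetaC n ^ (v.val * y.val) := by
  have hn : n ≠ 0 := NeZero.ne n
  set g := Nat.gcd y.val n with hg
  have hgdvdn : g ∣ n := Nat.gcd_dvd_right _ _
  have hgdvdy : g ∣ y.val := Nat.gcd_dvd_left _ _
  have hgpos : 0 < g := Nat.gcd_pos_of_pos_right _ (Nat.pos_of_ne_zero hn)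
  set m := y.val / g with hm
  have hmcop : Nat.Coprime m (n / g) := Nat.coprime_div_gcd_div_gcd hgpos
  obtain ⟨m', hm'cop, hm'eq⟩ := exists_coprime_lift (Nat.div_dvd_of_dvd hgdvdn) hn hmcop
  set u : (ZMod n)ˣ := ZMod.unitOfCoprime m' hm'cop with hu
  have key : ∀ w : ZMod n, zetaC n ^ (g * ((↑u : ZMod n) * w).val) =
      zetaC n ^ (w.val * y.val) := by
    intro w
    apply zetaC_pow_congr n hn
    have h1 : ((↑u : ZMod n) * w).val ≡ m' * w.val [MOD n] := by
      rw [ZMod.val_mul, hu, ZMod.coe_unitOfCoprime, ZMod.val_natCast]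
      exact (Nat.mod_modEq _ n).trans ((Nat.mod_modEq m' n).mul_right w.val)
    have h2 : g * m' ≡ g * m [MOD n] := by
      have := Nat.ModEq.mul_left' g hm'eq
      rwa [Nat.mul_div_cancel' hgdvdn] at this
    calc g * ((↑u : ZMod n) * w).val
        ≡ g * (m' * w.val) [MOD n] := h1.mul_left g
      _ = (g * m') * w.val := by ring
      _ ≡ (g * m) * w.val [MOD n] := h2.mul_right w.val
      _ = w.val * y.val := by rw [Nat.mul_div_cancel' hgdvdy, mul_comm]
  refine Finset.sum_nbij' (fun v => (↑u⁻¹ : ZMod n) * v) (fun v => (↑u : ZMod n) * v)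
    ?_ ?_ ?_ ?_ ?_
  · intro a ha
    simp only [Finset.mem_filter, Finset.mem_univ, true_and] at ha ⊢
    rw [gcd_val_unit_mul u⁻¹]; exact ha
  · intro a ha
    simp only [Finset.mem_filter, Finset.mem_univ, true_and] at ha ⊢
    rw [gcd_val_unit_mul u]; exact ha
  · intro a _; exact Units.mul_inv_cancel_left u a
  · intro a _; exact Units.inv_mul_cancel_left u a
  · intro a _
    rw [← key ((↑u⁻¹ : ZMod n) * a), Units.mul_inv_cancel_left]

lemma nuW_gcd_invariant {n : ℕ} [NeZero n] {S T : Finset (ZMod n)} (h : IsFormallyDual S T)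
    {a b : ZMod n} (hab : Nat.gcd a.val n = Nat.gcd b.val n) :
    (nuW S a : ℂ) = (nuW S b : ℂ) := by
  obtain ⟨hS, hT, -, hTS⟩ := h
  have hn : n ≠ 0 := NeZero.ne n
  set P : Polynomial ℚ := ∑ v : ZMod n, Polynomial.C ((nuW T v : ℚ)) * Polynomial.X ^ (v.val)
    with hP
  have heval : ∀ w : ZMod n, Polynomial.aeval (zetaC n ^ w.val) P =
      algebraMap ℚ ℂ ((T.card : ℚ) ^ 2 / (S.card : ℚ) * (nuW S w : ℚ)) := by
    intro w
    have hterm : ∀ v : ZMod n,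
        Polynomial.aeval (zetaC n ^ w.val)
          (Polynomial.C ((nuW T v : ℚ)) * Polynomial.X ^ v.val)
        = (nuW T v : ℂ) * zetaC n ^ (v.val * w.val) := by
      intro v
      rw [map_mul, Polynomial.aeval_C, map_pow, Polynomial.aeval_X, ← pow_mul,
        mul_comm w.val, eq_ratCast]
      norm_num
    rw [hP, map_sum, Finset.sum_congr rfl fun v _ => hterm v, ← hTS w, eq_ratCast]
    push_cast
    ring
  have hA : (T.card : ℚ) ^ 2 / (S.card : ℚ) ≠ 0 := by
    apply div_ne_zero
    · exact pow_ne_zero _ (Nat.cast_ne_zero.mpr hT.card_pos.ne')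
    · exact Nat.cast_ne_zero.mpr hS.card_pos.ne'
  have h2 := galois_inv n hn hab P _ (heval a)
  rw [heval b] at h2
  have h4 := mul_left_cancel₀ hA ((algebraMap ℚ ℂ).injective h2)
  exact_mod_cast h4.symm

theorem stmt6 (n : ℕ) [NeZero n] (S T : Finset (ZMod n)) (h : IsFormallyDual S T)
    (y : ZMod n) :
    ((S.card : ℂ) ^ 2 / (T.card : ℂ)) * (nuW T y : ℂ) =
      ∑ e ∈ n.divisors,
        (∑ v ∈ Finset.univ.filter (fun v : ZMod n => Nat.gcd v.val n = e),
          zetaC n ^ (Nat.gcd y.val n * v.val)) * (nuW S (e : ZMod n) : ℂ) := by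
  
  rw [h.2.2.1 y,
    ← Finset.sum_fiberwise_of_maps_to (g := fun v : ZMod n => Nat.gcd v.val n)
      (fun v _ => Nat.mem_divisors.mpr ⟨Nat.gcd_dvd_right _ _, NeZero.ne n⟩)
      (fun v => (nuW S v : ℂ) * zetaC n ^ (v.val * y.val))]
  refine Finset.sum_congr rfl fun e he => ?_
  rw [fiber_sum y e, Finset.sum_mul]
  refine Finset.sum_congr rfl fun v hv => ?_
  simp only [Finset.mem_filter, Finset.mem_univ, true_and] at hv
  have hge : Nat.gcd ((e : ZMod n)).val n = e := by
    rw [ZMod.val_natCast, gcd_mod_left', Nat.gcd_eq_left (Nat.dvd_of_mem_divisors he)]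
  rw [nuW_gcd_invariant h (hv.trans hge.symm), mul_comm]
end

section
/- Let S, T ⊆ ℤ/nℤ be formally dual subsets. Then (|S|²/|T|)·ν_T(1) = Σ_{e | n} μ(n/e)·ν_S(e). -/
open Finset Complex

/-!
Evaluating the first duality relation at `y = 1` gives `Σ_v ν_S(v) ζ^v`. The second relation
writes each rational number `ν_S(y)` as a ℚ-linear combination of powers of `ζ`; since `ζ` and
`ζ^u` (`u` a unit) have the same minimal polynomial `Φ_n` over ℚ, this forces
`ν_S(u y) = ν_S(y)`, so `ν_S(v)` only depends on `g = gcd(v, n)`. For fixed `g` the `ζ^v` run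
over the primitive `(n/g)`-th roots of unity, whose sum is `μ(n/g)` by Möbius inversion of
`Σ_{d ∣ m} Σ_{ξ primitive d-th root} ξ = [m = 1]`.
-/

open Polynomial

theorem pow_val_mul_val_of_pow_eq_one {M : Type*} [Monoid M] {ζ : M} {n : ℕ} (h : ζ ^ n = 1)
    (a b : ZMod n) : ζ ^ (a.val * b.val) = ζ ^ (a * b).val := by
  rw [ZMod.val_mul, ← pow_eq_pow_mod _ h]

theorem ZMod.exists_isUnit_mul_gcd_val {n : ℕ} [NeZero n] (v : ZMod n) :
    ∃ u : ZMod n, IsUnit u ∧ v = u * (n.gcd v.val : ℕ) := by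
  obtain ⟨d, hd, u, hu, rfl⟩ := ZMod.eq_unit_mul_divisor v
  refine ⟨u, hu, ?_⟩
  have hcop : u.val.Coprime n := ZMod.val_coe_unit_coprime hu.unit
  suffices n.gcd (u * d).val = d by rw [this]
  rw [ZMod.val_mul, ZMod.val_natCast, Nat.gcd_comm, ← Nat.gcd_rec, Nat.gcd_comm,
    hcop.gcd_mul_left_cancel, ← Nat.gcd_rec, Nat.gcd_eq_right hd]

namespace IsPrimitiveRoot

theorem sum_rat_mul_pow_eq {K : Type*} [Field K] [CharZero K] {ζ ξ : K} {n : ℕ} (hn : 0 < n)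
    (hζ : IsPrimitiveRoot ζ n) (hξ : IsPrimitiveRoot ξ n) {ι : Type*} (s : Finset ι)
    (a : ι → ℚ) (e : ι → ℕ) (c : ℚ) (h : ∑ i ∈ s, (a i : K) * ζ ^ e i = c) :
    ∑ i ∈ s, (a i : K) * ξ ^ e i = c := by
  set P : ℚ[X] := ∑ i ∈ s, C (a i) * X ^ e i - C c
  have aeval_P (x : K) : aeval x P = ∑ i ∈ s, (a i : K) * x ^ e i - c := by
    simp [P, map_sum]
  have hminpoly : minpoly ℚ ζ = minpoly ℚ ξ := by
    rw [← cyclotomic_eq_minpoly_rat hζ hn, cyclotomic_eq_minpoly_rat hξ hn]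
  have hPζ : aeval ζ P = 0 := by rw [aeval_P, h, sub_self]
  have hPξ : aeval ξ P = 0 :=
    aeval_eq_zero_of_dvd_aeval_eq_zero (hminpoly ▸ minpoly.dvd ℚ ζ hPζ) (minpoly.aeval ℚ ξ)
  rwa [aeval_P, sub_eq_zero] at hPξ

theorem apply_mul_eq_of_eq_sum_rat_mul_pow {K : Type*} [Field K] [CharZero K] {ζ : K} {n : ℕ}
    [NeZero n] (hζ : IsPrimitiveRoot ζ n) {f g : ZMod n → ℚ}
    (hfg : ∀ y, (g y : K) = ∑ v, (f v : K) * ζ ^ (v * y).val) {u : ZMod n} (hu : IsUnit u)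
    (y : ZMod n) : g (u * y) = g y := by
  have hξ : IsPrimitiveRoot (ζ ^ u.val) n :=
    hζ.pow_of_coprime _ (ZMod.val_coe_unit_coprime hu.unit)
  have hsum := hζ.sum_rat_mul_pow_eq (NeZero.pos n) hξ univ f (fun v => (v * y).val) (g y)
    (hfg y).symm
  have hg : (g (u * y) : K) = g y := by
    rw [hfg, ← hsum]
    refine Finset.sum_congr rfl fun v _ => ?_
    rw [← pow_mul, pow_val_mul_val_of_pow_eq_one hζ.pow_eq_one, mul_left_comm]
  exact_mod_cast hg

theorem isPrimitiveRoot_pow_iff_gcd_eq {M : Type*} [CommMonoid M] {ζ : M} {n g : ℕ}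
    (hζ : IsPrimitiveRoot ζ n) (hn : n ≠ 0) (hg : g ∣ n) (k : ℕ) :
    IsPrimitiveRoot (ζ ^ k) (n / g) ↔ n.gcd k = g := by
  rw [IsPrimitiveRoot.iff_orderOf, (hζ.isOfFinOrder hn).orderOf_pow, ← hζ.eq_orderOf,
    Nat.div_eq_iff_eq_of_dvd_dvd hn (Nat.gcd_dvd_left n k) hg]

variable {R : Type*} [CommRing R] [IsDomain R]

theorem sum_pow_val_filter_gcd_eq {ζ : R} {n g : ℕ} [NeZero n] (hζ : IsPrimitiveRoot ζ n)
    (hg : g ∣ n) :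
    ∑ v : ZMod n with n.gcd v.val = g, ζ ^ v.val = ∑ x ∈ primitiveRoots (n / g) R, x := by
  classical
  have hn : n ≠ 0 := NeZero.ne n
  have hm : 0 < n / g :=
    Nat.div_pos (Nat.le_of_dvd (NeZero.pos n) hg) (Nat.pos_of_dvd_of_pos hg (NeZero.pos n))
  refine (sum_image (f := id)
    fun a _ b _ hab => ZMod.val_injective n (hζ.pow_inj a.val_lt b.val_lt hab)).symm.trans ?_
  congr 1
  ext x
  simp only [mem_image, mem_filter, mem_univ, true_and, mem_primitiveRoots hm]
  constructor
  · rintro ⟨v, hv, rfl⟩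
    exact (hζ.isPrimitiveRoot_pow_iff_gcd_eq hn hg _).2 hv
  · intro hx
    obtain ⟨k, hk, rfl⟩ :=
      hζ.eq_pow_of_pow_eq_one ((hx.pow_eq_one_iff_dvd n).2 (Nat.div_dvd_of_dvd hg))
    refine ⟨k, ?_, by rw [ZMod.val_cast_of_lt hk]⟩
    rw [ZMod.val_cast_of_lt hk]
    exact (hζ.isPrimitiveRoot_pow_iff_gcd_eq hn hg _).1 hx

theorem sum_nthRootsFinset_one {ζ : R} {m : ℕ} (hζ : IsPrimitiveRoot ζ m) :
    ∑ x ∈ nthRootsFinset m (1 : R), x = if m = 1 then 1 else 0 := by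
  classical
  have hsum : ∑ x ∈ nthRootsFinset m (1 : R), x = ∑ i ∈ range m, ζ ^ i := by
    rw [nthRootsFinset_def, ← Multiset.toFinset_eq hζ.nthRoots_one_nodup, Finset.sum_mk,
      hζ.nthRoots_eq (one_pow m)]
    simp [Finset.sum, Finset.range]
  rw [hsum]
  rcases lt_trichotomy m 1 with hm | rfl | hm
  · simp [Nat.lt_one_iff.1 hm]
  · simp
  · simp [hm.ne', hζ.geom_sum_eq_zero hm]

end IsPrimitiveRoot

theorem Complex.sum_primitiveRoots_eq_moebius (m : ℕ) :
    ∑ x ∈ primitiveRoots m ℂ, x = ArithmeticFunction.moebius m := by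
  rcases Nat.eq_zero_or_pos m with rfl | hm
  · simp
  have sum_divisors (k : ℕ) (hk : 0 < k) :
      ∑ d ∈ k.divisors, ∑ x ∈ primitiveRoots d ℂ, x = if k = 1 then 1 else 0 := by
    rw [← (Complex.isPrimitiveRoot_exp k hk.ne').sum_nthRootsFinset_one,
      IsPrimitiveRoot.nthRoots_one_eq_biUnion_primitiveRoots,
      sum_biUnion fun i _ j _ hij => IsPrimitiveRoot.disjoint hij]
  rw [← ArithmeticFunction.sum_eq_iff_sum_mul_moebius_eq.1 sum_divisors m hm,
    Nat.sum_divisorsAntidiagonal' fun a b =>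
      (ArithmeticFunction.moebius a : ℂ) * if b = 1 then 1 else 0]
  simp [hm.ne']

theorem isPrimitiveRoot_zetaC (n : ℕ) [NeZero n] : IsPrimitiveRoot (zetaC n) n :=
  Complex.isPrimitiveRoot_exp n (NeZero.ne n)

theorem IsFormallyDual.nuW_mul_left {n : ℕ} [NeZero n] {S T : Finset (ZMod n)}
    (h : IsFormallyDual S T) {u : ZMod n} (hu : IsUnit u) (y : ZMod n) :
    nuW S (u * y) = nuW S y := by
  obtain ⟨hS, hT, -, hdual⟩ := h
  have hζ := isPrimitiveRoot_zetaC n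
  have hc : ((T.card : ℚ) ^ 2 / S.card) ≠ 0 := by positivity
  have hdual' (y : ZMod n) : (((T.card : ℚ) ^ 2 / S.card * nuW S y : ℚ) : ℂ) =
      ∑ v, ((nuW T v : ℚ) : ℂ) * zetaC n ^ (v * y).val := by
    push_cast
    simp only [hdual, pow_val_mul_val_of_pow_eq_one hζ.pow_eq_one]
  exact_mod_cast mul_left_cancel₀ hc (hζ.apply_mul_eq_of_eq_sum_rat_mul_pow hdual' hu y)

theorem IsFormallyDual.nuW_eq_nuW_gcd_val {n : ℕ} [NeZero n] {S T : Finset (ZMod n)}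
    (h : IsFormallyDual S T) (v : ZMod n) : nuW S v = nuW S (n.gcd v.val : ℕ) := by
  obtain ⟨u, hu, hv⟩ := ZMod.exists_isUnit_mul_gcd_val v
  conv_lhs => rw [hv]
  exact h.nuW_mul_left hu _

theorem stmt7 (n : ℕ) [NeZero n] (S T : Finset (ZMod n)) (h : IsFormallyDual S T) :
    ((S.card : ℂ) ^ 2 / (T.card : ℂ)) * (nuW T 1 : ℂ) =
      ∑ e ∈ n.divisors, (ArithmeticFunction.moebius (n / e) : ℂ) * (nuW S (e : ZMod n) : ℂ) := by
  have hζ := isPrimitiveRoot_zetaC n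
  rw [h.2.2.1 1, ← sum_fiberwise_of_maps_to (g := fun v : ZMod n => n.gcd v.val)
    fun v _ => Nat.mem_divisors.2 ⟨Nat.gcd_dvd_left _ _, NeZero.ne n⟩]
  refine sum_congr rfl fun g hg => ?_
  calc ∑ v : ZMod n with n.gcd v.val = g, (nuW S v : ℂ) * zetaC n ^ (v.val * (1 : ZMod n).val)
      = ∑ v : ZMod n with n.gcd v.val = g, (nuW S g : ℂ) * zetaC n ^ v.val := by
        refine sum_congr rfl fun v hv => ?_
        rw [pow_val_mul_val_of_pow_eq_one hζ.pow_eq_one, mul_one, h.nuW_eq_nuW_gcd_val,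
          (mem_filter.1 hv).2]
    _ = _ := by
      rw [← mul_sum, hζ.sum_pow_val_filter_gcd_eq (Nat.dvd_of_mem_divisors hg),
        Complex.sum_primitiveRoots_eq_moebius, mul_comm]
end

section
/- Let p be prime, k ≥ 1, and S, T ⊆ ℤ/p^kℤ formally dual subsets. Then (|S|²/|T|)·ν_T(1) = ν_S(0) − ν_S(p^{k−1}). -/
/-!
Let `n = p ^ (k + 1)`, `m = p ^ k` and `ζ = ζ_n`. Duality at `y = 1` says that
`∑_{i < n} ν_S(i) ζ ^ i` equals the rational number `q = |S|² ν_T(1) / |T|`, so the rational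
polynomial `∑_{i < n} ν_S(i) X ^ i - q` vanishes at `ζ` and is divisible by
`Φ_n = ∑_{i < p} X ^ (m i)`. Its degree is below `n`, so the quotient has degree below `m`, and
the coefficients at `0` and at `m` are both the constant coefficient of the quotient:
`ν_S(0) - q = ν_S(m)`.
-/

open Finset Complex

open Polynomial

theorem ZMod.sum_eq_sum_range {M : Type*} [AddCommMonoid M] {n : ℕ} [NeZero n] (f : ZMod n → M) :
    ∑ x, f x = ∑ i ∈ range n, f i :=
  Finset.sum_nbij' ZMod.val Nat.cast (fun x _ => mem_range.2 x.val_lt) (fun _ _ => mem_univ _)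
    (fun x _ => ZMod.natCast_zmod_val x) (fun _ hi => ZMod.val_cast_of_lt (mem_range.1 hi))
    (fun x _ => by rw [ZMod.natCast_zmod_val])

theorem Polynomial.coeff_add_prime_pow_eq_of_cyclotomic_dvd {R : Type*} [CommRing R] [Nontrivial R]
    {p k : ℕ} (hp : p.Prime) {f : R[X]} (hdeg : f.degree < ↑(p ^ (k + 1)))
    (hdvd : cyclotomic (p ^ (k + 1)) R ∣ f) {j : ℕ} (hj : j < p ^ k) :
    f.coeff (j + p ^ k) = f.coeff j := by
  obtain ⟨Q, rfl⟩ := hdvd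
  have hQ : ∀ n, p ^ k ≤ n → Q.coeff n = 0 := by
    intro n hn
    rcases eq_or_ne Q 0 with rfl | hQ0
    · rfl
    have hmonic := cyclotomic.monic (p ^ (k + 1)) R
    rw [← natDegree_lt_iff_degree_lt (hmonic.mul_right_ne_zero hQ0), hmonic.natDegree_mul' hQ0,
      natDegree_cyclotomic, Nat.totient_prime_pow_succ hp] at hdeg
    have : p ^ (k + 1) = p ^ k * (p - 1) + p ^ k := by
      rw [pow_succ, ← Nat.mul_add_one, Nat.sub_add_cancel hp.one_le]
    exact coeff_eq_zero_of_natDegree_lt (by omega)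
  -- `Φ_{p^(k+1)} = ∑ i < p, X ^ (p ^ k * i)` and `Q` fits in one block of length `p ^ k`.
  have hcoeff : ∀ d, (cyclotomic (p ^ (k + 1)) R * Q).coeff d =
      ∑ i ∈ range p, if p ^ k * i ≤ d then Q.coeff (d - p ^ k * i) else 0 := by
    intro d
    simp only [cyclotomic_prime_pow_eq_geom_sum hp, Finset.sum_mul, finsetSum_coeff, ← pow_mul,
      coeff_X_pow_mul']
  rw [hcoeff, hcoeff, Finset.sum_eq_single_of_mem 1 (by simpa using hp.one_lt),
    Finset.sum_eq_single_of_mem 0 (by simpa using hp.pos)]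
  · simp
  · intro i _ hi
    have : p ^ k ≤ p ^ k * i := Nat.le_mul_of_pos_right _ (Nat.pos_of_ne_zero hi)
    rw [if_neg (by omega)]
  · intro i _ hi
    rcases Nat.lt_or_gt_of_ne hi with hi | hi
    · obtain rfl : i = 0 := by omega
      simpa using hQ _ (by omega)
    · have : p ^ k * 2 ≤ p ^ k * i := Nat.mul_le_mul_left _ hi
      rw [if_neg (by omega)]

theorem IsPrimitiveRoot.coeff_add_prime_pow_eq_of_sum_eq_zero {K : Type*} [Field K] [CharZero K]
    {p k : ℕ} (hp : p.Prime) {ζ : K} (hζ : IsPrimitiveRoot ζ (p ^ (k + 1))) (c : ℕ → ℚ)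
    (hsum : ∑ i ∈ range (p ^ (k + 1)), (c i : K) * ζ ^ i = 0) {j : ℕ} (hj : j < p ^ k) :
    c (j + p ^ k) = c j := by
  set P : ℚ[X] := ∑ i ∈ range (p ^ (k + 1)), C (c i) * X ^ i
  have hcoeff : ∀ n, P.coeff n = if n < p ^ (k + 1) then c n else 0 := by
    simp [P]
  have hdeg : P.degree < ↑(p ^ (k + 1)) :=
    (degree_lt_iff_coeff_zero _ _).2 fun n hn => by rw [hcoeff, if_neg (not_lt.2 hn)]
  have hdvd : cyclotomic (p ^ (k + 1)) ℚ ∣ P := by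
    rw [cyclotomic_eq_minpoly_rat hζ (pow_pos hp.pos _)]
    exact minpoly.dvd ℚ ζ (by simpa [P] using hsum)
  have hlt : j + p ^ k < p ^ (k + 1) := by
    have : p ^ k * 2 ≤ p ^ k * p := Nat.mul_le_mul_left _ hp.two_le
    rw [pow_succ]
    omega
  simpa [hcoeff, hlt, hlt.trans' (Nat.lt_add_of_pos_right (pow_pos hp.pos k))] using
    coeff_add_prime_pow_eq_of_cyclotomic_dvd hp hdeg hdvd hj

theorem IsFormallyDual.mul_nuW_one_eq_sum_range {n : ℕ} [NeZero n] (hn : 1 < n)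
    {S T : Finset (ZMod n)} (h : IsFormallyDual S T) :
    (S.card : ℂ) ^ 2 / T.card * nuW T 1 = ∑ i ∈ range n, (nuW S i : ℂ) * zetaC n ^ i := by
  rw [h.2.2.1 1, ZMod.val_one_eq_one_mod, Nat.mod_eq_of_lt hn, ZMod.sum_eq_sum_range]
  exact Finset.sum_congr rfl fun i hi => by rw [ZMod.val_cast_of_lt (mem_range.1 hi), mul_one]

theorem stmt9 (p k : ℕ) [Fact p.Prime] (hk : 1 ≤ k) (S T : Finset (ZMod (p ^ k)))
    (h : IsFormallyDual S T) :
    ((S.card : ℂ) ^ 2 / (T.card : ℂ)) * (nuW T 1 : ℂ) =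
      (nuW S 0 : ℂ) - (nuW S ((p ^ (k - 1) : ℕ) : ZMod (p ^ k)) : ℂ) := by
  obtain ⟨k, rfl⟩ := Nat.exists_eq_add_of_le' hk
  rw [Nat.add_sub_cancel]
  have hp : p.Prime := Fact.out
  have hζ : IsPrimitiveRoot (zetaC (p ^ (k + 1))) (p ^ (k + 1)) :=
    Complex.isPrimitiveRoot_exp _ (NeZero.ne _)
  set q : ℚ := (S.card : ℚ) ^ 2 / T.card * nuW T 1 with hq
  have hdual := h.mul_nuW_one_eq_sum_range (Nat.one_lt_pow k.succ_ne_zero hp.one_lt)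
  have hsum : ∑ i ∈ range (p ^ (k + 1)),
      (((nuW S i - if i = 0 then q else 0 : ℚ)) : ℂ) * zetaC (p ^ (k + 1)) ^ i = 0 := by
    simp only [Rat.cast_sub, Rat.cast_natCast, sub_mul, Finset.sum_sub_distrib, ← hdual]
    rw [Finset.sum_eq_single_of_mem 0 (mem_range.2 (pow_pos hp.pos _)) fun i _ hi => by simp [hi]]
    simp [hq]
  have hperiodic := hζ.coeff_add_prime_pow_eq_of_sum_eq_zero hp _ hsum (pow_pos hp.pos k)
  simp only [zero_add, if_neg (pow_ne_zero k hp.ne_zero), sub_zero, Nat.cast_zero, if_true]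
    at hperiodic
  calc ((S.card : ℂ) ^ 2 / (T.card : ℂ)) * (nuW T 1 : ℂ) = (q : ℂ) := by push_cast [hq]; rfl
    _ = _ := by rw [show q = nuW S 0 - nuW S (p ^ k : ℕ) by linarith]; push_cast; rfl
end

section
/- Let p be prime, k ≥ 1, and S, T ⊆ ℤ/p^kℤ formally dual subsets. Then |S|² = ν_S(0) + Σ_{l=0}^{k−1} (p−1)·p^{k−l−1}·ν_S(p^l). -/
open Finset Complex

/-- Key lemma: `nuW S` takes equal values at points `y, y'` for which `ζ^{y.val}` and
`ζ^{y'.val}` are primitive roots of unity of the same order. -/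
lemma nuW_eq_of_primitive {n : ℕ} [NeZero n] (S T : Finset (ZMod n))
    (h : IsFormallyDual S T) {m : ℕ} (hm : 0 < m) {y y' : ZMod n}
    (hy : IsPrimitiveRoot (zetaC n ^ y.val) m)
    (hy' : IsPrimitiveRoot (zetaC n ^ y'.val) m) :
    nuW S y = nuW S y' := by
  obtain ⟨hS, hT, _, hdual⟩ := h
  set ζ := zetaC n with hζ
  set f : Polynomial ℚ := ∑ v : ZMod n, Polynomial.C ((nuW T v : ℚ)) * Polynomial.X ^ (v.val)
    with hf
  have hev : ∀ z : ZMod n,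
      Polynomial.aeval (ζ ^ z.val) f = ((T.card : ℂ) ^ 2 / (S.card : ℂ)) * (nuW S z : ℂ) := by
    intro z
    rw [hdual z, hf]
    simp only [map_sum, map_mul, map_pow, Polynomial.aeval_C, Polynomial.aeval_X]
    refine Finset.sum_congr rfl fun v _ => ?_
    rw [← pow_mul, mul_comm z.val v.val]
    norm_num
  set q : ℚ := ((T.card : ℚ) ^ 2 / (S.card : ℚ)) * (nuW S y : ℚ) with hq
  have hqC : (q : ℂ) = ((T.card : ℂ) ^ 2 / (S.card : ℂ)) * (nuW S y : ℂ) := by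
    push_cast [hq]; ring
  have hroot : Polynomial.aeval (ζ ^ y.val) (f - Polynomial.C q) = 0 := by
    rw [map_sub, hev y, Polynomial.aeval_C]
    rw [show (algebraMap ℚ ℂ) q = (q : ℂ) from rfl, hqC, sub_self]
  have hdvd : minpoly ℚ (ζ ^ y.val) ∣ (f - Polynomial.C q) := minpoly.dvd ℚ _ hroot
  have h1 : Polynomial.cyclotomic m ℚ = minpoly ℚ (ζ ^ y.val) :=
    Polynomial.cyclotomic_eq_minpoly_rat hy hm
  have h2 : Polynomial.cyclotomic m ℚ = minpoly ℚ (ζ ^ y'.val) :=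
    Polynomial.cyclotomic_eq_minpoly_rat hy' hm
  obtain ⟨g, hg⟩ := hdvd
  have hroot' : Polynomial.aeval (ζ ^ y'.val) (f - Polynomial.C q) = 0 := by
    rw [hg, ← h1, h2, map_mul, minpoly.aeval, zero_mul]
  have haev : Polynomial.aeval (ζ ^ y'.val) f = (q : ℂ) := by
    have := hroot'
    rw [map_sub, Polynomial.aeval_C, sub_eq_zero] at this
    exact this
  have heq : ((T.card : ℂ) ^ 2 / (S.card : ℂ)) * (nuW S y' : ℂ) =
      ((T.card : ℂ) ^ 2 / (S.card : ℂ)) * (nuW S y : ℂ) := by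
    rw [← hev y', haev, hqC]
  have hSc : (S.card : ℂ) ≠ 0 := Nat.cast_ne_zero.2 hS.card_pos.ne'
  have hTc : (T.card : ℂ) ≠ 0 := Nat.cast_ne_zero.2 hT.card_pos.ne'
  have hc : ((T.card : ℂ) ^ 2 / (S.card : ℂ)) ≠ 0 := div_ne_zero (pow_ne_zero _ hTc) hSc
  have := mul_left_cancel₀ hc heq
  exact_mod_cast this.symm

lemma count_multiples_range (d m : ℕ) (hd : d ≠ 0) :
    (((Finset.range (d * m)).filter (fun i => d ∣ i)).card) = m := by
  have : ((Finset.range (d * m)).filter (fun i => d ∣ i)) =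
      (Finset.range m).image (fun j => d * j) := by
    ext x
    simp only [Finset.mem_filter, Finset.mem_range, Finset.mem_image]
    constructor
    · rintro ⟨hlt, ⟨j, rfl⟩⟩
      exact ⟨j, Nat.lt_of_mul_lt_mul_left hlt, rfl⟩
    · rintro ⟨j, hj, rfl⟩
      exact ⟨(Nat.mul_lt_mul_left (Nat.pos_of_ne_zero hd)).2 hj, ⟨j, rfl⟩⟩
  rw [this, Finset.card_image_of_injective _ (fun a b hab => by
    exact Nat.eq_of_mul_eq_mul_left (Nat.pos_of_ne_zero hd) hab)]
  exact Finset.card_range m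

theorem stmt10 (p k : ℕ) [Fact p.Prime] (hk : 1 ≤ k) (S T : Finset (ZMod (p ^ k)))
    (h : IsFormallyDual S T) :
    S.card ^ 2 = nuW S 0 +
      ∑ l ∈ Finset.range k, (p - 1) * p ^ (k - l - 1) * nuW S ((p ^ l : ℕ) : ZMod (p ^ k)) := by
  classical
  have hp : p.Prime := Fact.out
  have hp1 : 1 < p := hp.one_lt
  have hpk0 : p ^ k ≠ 0 := pow_ne_zero _ hp.ne_zero
  have htot : S.card ^ 2 = ∑ y : ZMod (p ^ k), nuW S y := by
    have hcf := Finset.card_eq_sum_card_fiberwise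
      (f := fun q : ZMod (p ^ k) × ZMod (p ^ k) => q.1 - q.2) (s := S ×ˢ S) (t := Finset.univ)
      (fun x _ => Finset.mem_univ _)
    rw [Finset.card_product] at hcf
    rw [sq]
    exact hcf
  have hzero : ∑ y : ZMod (p ^ k), nuW S y
      = nuW S 0 + ∑ y ∈ Finset.univ.erase (0 : ZMod (p ^ k)), nuW S y :=
    (Finset.add_sum_erase _ _ (Finset.mem_univ 0)).symm
  have hmaps : ∀ y ∈ Finset.univ.erase (0 : ZMod (p ^ k)),
      padicValNat p y.val ∈ Finset.range k := by
    intro y hy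
    have hy0 : y ≠ 0 := (Finset.mem_erase.1 hy).1
    have hv0 : y.val ≠ 0 := fun hh => hy0 ((ZMod.val_eq_zero y).1 hh)
    have h1 : p ^ padicValNat p y.val ≤ y.val :=
      Nat.le_of_dvd (Nat.pos_of_ne_zero hv0) pow_padicValNat_dvd
    have h2 : y.val < p ^ k := ZMod.val_lt y
    rw [Finset.mem_range]
    exact (Nat.pow_lt_pow_iff_right hp1).1 (lt_of_le_of_lt h1 h2)
  have hfib := Finset.sum_fiberwise_of_maps_to hmaps (fun y => nuW S y)
  rw [htot, hzero, ← hfib]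
  congr 1
  refine Finset.sum_congr rfl fun l hl => ?_
  have hlk : l < k := Finset.mem_range.1 hl
  set A := (Finset.univ.erase (0 : ZMod (p ^ k))).filter
    (fun y => padicValNat p y.val = l) with hA
  have hprim : ∀ y : ZMod (p ^ k), y.val ≠ 0 → padicValNat p y.val = l →
      IsPrimitiveRoot (zetaC (p ^ k) ^ y.val) (p ^ (k - l)) := by
    intro y hv0 hval
    obtain ⟨u, hu⟩ : p ^ l ∣ y.val := hval ▸ pow_padicValNat_dvd
    have hpd : ¬ p ∣ u := by
      intro hdvd
      obtain ⟨w, rfl⟩ := hdvd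
      apply pow_succ_padicValNat_not_dvd (p := p) hv0
      rw [hval, hu, pow_succ]
      exact ⟨w, by ring⟩
    have hzeta : IsPrimitiveRoot (zetaC (p ^ k)) (p ^ k) :=
      Complex.isPrimitiveRoot_exp _ hpk0
    have h3 : IsPrimitiveRoot (zetaC (p ^ k) ^ (p ^ l)) (p ^ (k - l)) := by
      have := hzeta.pow_of_dvd (pow_ne_zero l hp.ne_zero) (pow_dvd_pow p hlk.le)
      rwa [Nat.pow_div hlk.le hp.pos] at this
    have hcop : Nat.Coprime u (p ^ (k - l)) :=
      Nat.Coprime.pow_right _ ((hp.coprime_iff_not_dvd.2 hpd).symm)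
    have h4 := h3.pow_of_coprime u hcop
    rw [hu, pow_mul]
    exact h4
  have hvpl : ((p ^ l : ℕ) : ZMod (p ^ k)).val = p ^ l :=
    ZMod.val_cast_of_lt (Nat.pow_lt_pow_right hp1 hlk)
  have hconst : ∀ y ∈ A, nuW S y = nuW S ((p ^ l : ℕ) : ZMod (p ^ k)) := by
    intro y hy
    rw [hA, Finset.mem_filter, Finset.mem_erase] at hy
    obtain ⟨⟨hy0, -⟩, hval⟩ := hy
    have hv0 : y.val ≠ 0 := fun hh => hy0 ((ZMod.val_eq_zero y).1 hh)
    have hvl : padicValNat p ((p ^ l : ℕ) : ZMod (p ^ k)).val = l := by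
      rw [hvpl]; exact padicValNat.prime_pow l
    refine nuW_eq_of_primitive S T h (m := p ^ (k - l)) (pow_pos hp.pos _)
      (hprim y hv0 hval) (hprim _ ?_ hvl)
    rw [hvpl]; exact pow_ne_zero _ hp.ne_zero
  have hsum : ∑ y ∈ A, nuW S y = A.card * nuW S ((p ^ l : ℕ) : ZMod (p ^ k)) := by
    rw [Finset.sum_congr rfl hconst, Finset.sum_const, smul_eq_mul]
  have hcard : A.card = (p - 1) * p ^ (k - l - 1) := by
    have hbij : A.card = ((Finset.range (p ^ k)).filter
        (fun mm => p ^ l ∣ mm ∧ ¬ p ^ (l + 1) ∣ mm)).card := by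
      apply Finset.card_bij (fun y _ => y.val)
      · intro y hy
        rw [hA, Finset.mem_filter, Finset.mem_erase] at hy
        obtain ⟨⟨hy0, -⟩, hval⟩ := hy
        have hv0 : y.val ≠ 0 := fun hh => hy0 ((ZMod.val_eq_zero y).1 hh)
        refine Finset.mem_filter.2 ⟨Finset.mem_range.2 (ZMod.val_lt y), ?_, ?_⟩
        · exact hval ▸ pow_padicValNat_dvd
        · intro hdvd
          exact pow_succ_padicValNat_not_dvd (p := p) hv0 (hval ▸ hdvd)
      · intro a ha b hb hab
        exact ZMod.val_injective _ hab
      · intro mm hmm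
        rw [Finset.mem_filter, Finset.mem_range] at hmm
        obtain ⟨hlt, hdvd, hndvd⟩ := hmm
        have hm0 : mm ≠ 0 := by rintro rfl; exact hndvd (dvd_zero _)
        have hval : ((mm : ZMod (p ^ k))).val = mm := ZMod.val_cast_of_lt hlt
        refine ⟨(mm : ZMod (p ^ k)), ?_, hval⟩
        rw [hA, Finset.mem_filter, Finset.mem_erase]
        refine ⟨⟨?_, Finset.mem_univ _⟩, ?_⟩
        · intro h0
          apply hm0
          rw [← hval, h0, ZMod.val_zero]
        · rw [hval]
          have h5 : l ≤ padicValNat p mm := (padicValNat_dvd_iff_le hm0).1 hdvd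
          have h6 : ¬ (l + 1 ≤ padicValNat p mm) := fun hh =>
            hndvd ((padicValNat_dvd_iff_le hm0).2 hh)
          omega
    rw [hbij]
    have hsub : (Finset.range (p ^ k)).filter (fun mm => p ^ (l + 1) ∣ mm) ⊆
        (Finset.range (p ^ k)).filter (fun mm => p ^ l ∣ mm) := by
      intro x hx
      rw [Finset.mem_filter] at *
      exact ⟨hx.1, dvd_trans (pow_dvd_pow p (Nat.le_succ l)) hx.2⟩
    have hsplit : (Finset.range (p ^ k)).filter (fun mm => p ^ l ∣ mm ∧ ¬ p ^ (l + 1) ∣ mm)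
        = (Finset.range (p ^ k)).filter (fun mm => p ^ l ∣ mm) \
          (Finset.range (p ^ k)).filter (fun mm => p ^ (l + 1) ∣ mm) := by
      ext x
      simp only [Finset.mem_sdiff, Finset.mem_filter, Finset.mem_range]
      tauto
    rw [hsplit, Finset.card_sdiff_of_subset hsub]
    have c1 : ((Finset.range (p ^ k)).filter (fun mm => p ^ l ∣ mm)).card = p ^ (k - l) := by
      have e1 : p ^ k = p ^ l * p ^ (k - l) := by rw [← pow_add]; congr 1; omega
      have := count_multiples_range (p ^ l) (p ^ (k - l)) (pow_ne_zero _ hp.ne_zero)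
      rw [← e1] at this
      exact this
    have c2 : ((Finset.range (p ^ k)).filter (fun mm => p ^ (l + 1) ∣ mm)).card
        = p ^ (k - l - 1) := by
      have e2 : p ^ k = p ^ (l + 1) * p ^ (k - l - 1) := by rw [← pow_add]; congr 1; omega
      have := count_multiples_range (p ^ (l + 1)) (p ^ (k - l - 1)) (pow_ne_zero _ hp.ne_zero)
      rw [← e2] at this
      exact this
    rw [c1, c2]
    have e3 : p ^ (k - l) = p * p ^ (k - l - 1) := by
      have h7 : k - l = (k - l - 1) + 1 := by omega
      conv_lhs => rw [h7, pow_succ']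
    rw [e3, Nat.sub_one_mul]
  rw [hsum, hcard]
end

section
/- Let Q ⊆ ℤ/p^kℤ (p prime, k ≥ 1) be a subset admitting a formally dual set. Then Q is contained in a coset of the proper subgroup pℤ/p^kℤ if and only if ν_Q(1) = 0. -/
open Finset Complex Polynomial

theorem stmt11 (p k : ℕ) [Fact p.Prime] (hk : 1 ≤ k) (Q : Finset (ZMod (p ^ k)))
    (S : Finset (ZMod (p ^ k))) (h : IsFormallyDual S Q) :
    (∃ c : ZMod (p ^ k), ∀ x ∈ Q, ∃ z : ZMod (p ^ k), x - c = (p : ZMod (p ^ k)) * z) ↔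
      nuW Q 1 = 0 := by
  have hp : p.Prime := Fact.out
  have hn1 : 1 < p ^ k := Nat.one_lt_pow (by omega) hp.one_lt
  haveI : Fact (1 < p ^ k) := ⟨hn1⟩
  have hn0 : p ^ k ≠ 0 := by omega
  obtain ⟨hS, hQ, heq, -⟩ := h
  constructor
  · -- forward: coset ⊆ pℤ + c ⇒ no difference equal to 1
    rintro ⟨c, hc⟩
    by_contra hne
    unfold nuW at hne
    obtain ⟨⟨a, b⟩, hab⟩ := Finset.card_ne_zero.mp hne
    simp only [Finset.mem_filter, Finset.mem_product] at hab
    obtain ⟨⟨ha, hb⟩, hab1⟩ := hab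
    obtain ⟨z1, hz1⟩ := hc a ha
    obtain ⟨z2, hz2⟩ := hc b hb
    have h1 : (1 : ZMod (p ^ k)) = (p : ZMod (p ^ k)) * (z1 - z2) := by
      have h2 : a - b = (a - c) - (b - c) := by ring
      rw [hab1] at h2
      rw [h2, hz1, hz2]; ring
    have h3 := congrArg (ZMod.castHom (dvd_pow_self p (by omega : k ≠ 0)) (ZMod p)) h1
    simp only [map_one, map_mul, map_natCast, ZMod.natCast_self, zero_mul] at h3
    exact one_ne_zero h3
  · -- reverse
    intro hnu1
    have hval1 : (1 : ZMod (p ^ k)).val = 1 := ZMod.val_one (p ^ k)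
    have hsum1 : ∑ v : ZMod (p ^ k), (nuW S v : ℂ) * zetaC (p ^ k) ^ v.val = 0 := by
      have h1 := heq 1
      rw [hnu1] at h1
      simpa [hval1] using h1.symm
    have hprim : IsPrimitiveRoot (zetaC (p ^ k)) (p ^ k) :=
      Complex.isPrimitiveRoot_exp (p ^ k) hn0
    set P : Polynomial ℚ :=
      ∑ v : ZMod (p ^ k), Polynomial.C ((nuW S v : ℚ)) * Polynomial.X ^ v.val with hP
    have haevalP : ∀ w : ℂ,
        Polynomial.aeval w P = ∑ v : ZMod (p ^ k), (nuW S v : ℂ) * w ^ v.val := by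
      intro w
      rw [hP, map_sum]
      refine Finset.sum_congr rfl fun v _ => ?_
      simp [Polynomial.aeval_natCast]
    have hPz : Polynomial.aeval (zetaC (p ^ k)) P = 0 := by rw [haevalP]; exact hsum1
    have hdvd : minpoly ℚ (zetaC (p ^ k)) ∣ P := minpoly.dvd ℚ _ hPz
    have hvan : ∀ u : ℕ, u.Coprime (p ^ k) →
        ∑ v : ZMod (p ^ k), (nuW S v : ℂ) * zetaC (p ^ k) ^ (v.val * u) = 0 := by
      intro u hu
      have hprim' : IsPrimitiveRoot (zetaC (p ^ k) ^ u) (p ^ k) := hprim.pow_of_coprime u hu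
      have hroot : Polynomial.aeval (zetaC (p ^ k) ^ u) (minpoly ℚ (zetaC (p ^ k))) = 0 := by
        rw [← Polynomial.cyclotomic_eq_minpoly_rat hprim (by omega),
          Polynomial.cyclotomic_eq_minpoly_rat hprim' (by omega)]
        exact minpoly.aeval ℚ _
      obtain ⟨g, hg⟩ := hdvd
      have h0 : Polynomial.aeval (zetaC (p ^ k) ^ u) P = 0 := by
        rw [hg, map_mul, hroot, zero_mul]
      rw [haevalP] at h0
      have hterm : ∀ v : ZMod (p ^ k), (nuW S v : ℂ) * zetaC (p ^ k) ^ (v.val * u)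
          = (nuW S v : ℂ) * (zetaC (p ^ k) ^ u) ^ v.val := fun v => by
        rw [← pow_mul, mul_comm v.val u]
      rw [Finset.sum_congr rfl fun v _ => hterm v]
      exact h0
    have hQcard : ((Q.card : ℂ)) ≠ 0 := Nat.cast_ne_zero.2 hQ.card_ne_zero
    have hScard : ((S.card : ℂ)) ^ 2 ≠ 0 := pow_ne_zero _ (Nat.cast_ne_zero.2 hS.card_ne_zero)
    have hnuy : ∀ y : ZMod (p ^ k), y.val.Coprime (p ^ k) → nuW Q y = 0 := by
      intro y hy
      have h1 := heq y
      rw [hvan y.val hy] at h1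
      rcases mul_eq_zero.1 h1 with h2 | h2
      · exact absurd h2 (div_ne_zero hScard hQcard)
      · exact_mod_cast h2
    obtain ⟨c, hc⟩ := hQ
    refine ⟨c, fun x hx => ?_⟩
    by_contra hnz
    push_neg at hnz
    have hpd : ¬ (p ∣ (x - c).val) := by
      intro hdvd'
      refine hnz (((x - c).val / p : ℕ) : ZMod (p ^ k)) ?_
      have hd : (((x - c).val : ℕ) : ZMod (p ^ k)) = x - c := by
        simp [ZMod.natCast_val, ZMod.cast_id]
      rw [← Nat.cast_mul, Nat.mul_div_cancel' hdvd', hd]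
    have hcop : (x - c).val.Coprime (p ^ k) :=
      ((hp.coprime_iff_not_dvd.2 hpd).symm).pow_right k
    have h0 := hnuy (x - c) hcop
    rw [nuW, Finset.card_eq_zero] at h0
    have hmem : (x, c) ∈ (Q ×ˢ Q).filter (fun q => q.1 - q.2 = x - c) := by
      simp [hx, hc]
    rw [h0] at hmem
    exact absurd hmem (Finset.notMem_empty _)
end

section
/- Let p be prime, k ≥ 1, and let S ⊆ ℤ/p^kℤ not be contained in any coset of a proper subgroup, with some formally dual set T′ also not contained in any proper coset. If T ⊆ ℤ/p^kℤ is any set formally dual to S, then T is not contained in any coset of a proper subgroup of ℤ/p^kℤ. -/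
open Finset Complex

/-- `S` is contained in a coset of a proper (additive) subgroup. -/
def InProperCoset {m : ℕ} [NeZero m] (S : Finset (ZMod m)) : Prop :=
  ∃ H : AddSubgroup (ZMod m), H ≠ ⊤ ∧ ∃ c : ZMod m, ∀ x ∈ S, x - c ∈ H

/-- The additive subgroup of multiples of `p` in `ZMod n`. -/
def pMulSub (n p : ℕ) : AddSubgroup (ZMod n) where
  carrier := {x | (p : ZMod n) ∣ x}
  zero_mem' := dvd_zero _
  add_mem' := fun ha hb => dvd_add ha hb
  neg_mem' := fun ha => (dvd_neg).mpr ha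

lemma mem_top_of_isUnit {n : ℕ} [NeZero n] (H : AddSubgroup (ZMod n)) (y : ZMod n)
    (hy : y ∈ H) (hu : IsUnit y) : H = ⊤ := by
  ext x
  simp only [AddSubgroup.mem_top, iff_true]
  obtain ⟨u, rfl⟩ := hu
  have hx : x = ((x * ↑u⁻¹).val) • (u : ZMod n) := by
    rw [nsmul_eq_mul, ZMod.natCast_val, ZMod.cast_id, mul_assoc]
    simp
  rw [hx]
  exact AddSubgroup.nsmul_mem H hy _

lemma dvd_of_not_isUnit (p k : ℕ) [Fact p.Prime] [NeZero (p ^ k)] (x : ZMod (p ^ k))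
    (hx : ¬ IsUnit x) : (p : ZMod (p ^ k)) ∣ x := by
  have hp : p.Prime := Fact.out
  have h1 : ¬ Nat.Coprime x.val (p ^ k) := by
    rw [← ZMod.isUnit_iff_coprime]
    rwa [ZMod.natCast_val, ZMod.cast_id]
  have h2 : p ∣ x.val := by
    by_contra h
    exact h1 (((hp.coprime_iff_not_dvd).mpr h).symm.pow_right k)
  obtain ⟨m, hm⟩ := h2
  refine ⟨(m : ZMod (p ^ k)), ?_⟩
  have hc : ((x.val : ℕ) : ZMod (p ^ k)) = x := by rw [ZMod.natCast_val, ZMod.cast_id]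
  rw [← hc, hm]
  push_cast
  ring

theorem stmt12 (p k : ℕ) [Fact p.Prime] (hk : 1 ≤ k) (S T' T : Finset (ZMod (p ^ k)))
    (hST' : IsFormallyDual S T') (hSnp : ¬ InProperCoset S) (hT'np : ¬ InProperCoset T')
    (hST : IsFormallyDual S T) :
    ¬ InProperCoset T := by
  rintro ⟨H, hH, c, hc⟩
  have hp : p.Prime := Fact.out
  obtain ⟨t0, ht0⟩ := hST'.2.1
  -- the subgroup of multiples of p is proper
  have hne : pMulSub (p ^ k) p ≠ ⊤ := by
    intro h
    have h1 : (p : ZMod (p ^ k)) ∣ 1 := by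
      have : (1 : ZMod (p ^ k)) ∈ pMulSub (p ^ k) p := by rw [h]; trivial
      exact this
    have hU : IsUnit (p : ZMod (p ^ k)) := isUnit_of_dvd_one h1
    rw [ZMod.isUnit_iff_coprime] at hU
    have : p = 1 := hU.eq_one_of_dvd (dvd_pow_self p (by omega))
    exact hp.one_lt.ne' this
  -- key transfer: nuW T' y ≠ 0 → nuW T y ≠ 0
  have hS0 : (S.card : ℂ) ≠ 0 := Nat.cast_ne_zero.mpr hST.1.card_pos.ne'
  have hT'0 : (T'.card : ℂ) ≠ 0 := Nat.cast_ne_zero.mpr hST'.2.1.card_pos.ne'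
  have key : ∀ y : ZMod (p ^ k), nuW T' y ≠ 0 → nuW T y ≠ 0 := by
    intro y hy hTy
    have e : ((S.card : ℂ) ^ 2 / (T.card : ℂ)) * (nuW T y : ℂ) =
        ((S.card : ℂ) ^ 2 / (T'.card : ℂ)) * (nuW T' y : ℂ) := by
      rw [hST.2.2.1 y, hST'.2.2.1 y]
    rw [hTy] at e
    simp only [Nat.cast_zero, mul_zero] at e
    rcases mul_eq_zero.mp e.symm with h | h
    · rcases div_eq_zero_iff.mp h with h' | h'
      · exact hS0 (pow_eq_zero_iff (by norm_num) |>.mp h')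
      · exact hT'0 h'
    · exact hy (Nat.cast_eq_zero.mp h)
  -- T' is contained in t0 + pMulSub, contradiction
  refine hT'np ⟨pMulSub (p ^ k) p, hne, t0, ?_⟩
  intro x hx
  apply dvd_of_not_isUnit
  intro hu
  -- nuW T' (x - t0) ≠ 0
  have h1 : nuW T' (x - t0) ≠ 0 := by
    have hmem : (x, t0) ∈ (T' ×ˢ T').filter (fun q => q.1 - q.2 = x - t0) := by
      simp [Finset.mem_filter, Finset.mem_product, hx, ht0]
    exact Finset.card_ne_zero_of_mem hmem
  have h2 := key _ h1
  -- get a pair in T with this difference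
  obtain ⟨⟨a, b⟩, hab⟩ := Finset.card_ne_zero.mp h2 |>.exists_mem
  simp only [Finset.mem_filter, Finset.mem_product] at hab
  obtain ⟨⟨haT, hbT⟩, hdiff⟩ := hab
  have hmemH : x - t0 ∈ H := by
    have := H.sub_mem (hc a haT) (hc b hbT)
    simpa [hdiff, sub_sub_sub_cancel_right] using this
  exact hH (mem_top_of_isUnit H _ hmemH hu)
end

section
/- Let p be prime, k ≥ 1, and S ⊆ ℤ/p^kℤ a primitive formal-dual set with |S| = p^l for some l with 2l ≤ k. Then ν_S(1) = 1. -/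
open Finset Complex

/-- If a rational polynomial vanishes at one primitive `n`-th root of unity in `ℂ`,
it vanishes at any other. -/
lemma aux_root (n : ℕ) (hn : 0 < n) (Q : Polynomial ℚ) (z z' : ℂ)
    (hz : IsPrimitiveRoot z n) (hz' : IsPrimitiveRoot z' n)
    (h : Polynomial.aeval z Q = 0) : Polynomial.aeval z' Q = 0 := by
  obtain ⟨R, hR⟩ := minpoly.dvd ℚ z h
  have e1 := Polynomial.cyclotomic_eq_minpoly_rat hz hn
  have e2 := Polynomial.cyclotomic_eq_minpoly_rat hz' hn
  rw [hR, map_mul, ← e1, e2, minpoly.aeval, zero_mul]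

theorem stmt16 (p k l : ℕ) [Fact p.Prime] (hk : 1 ≤ k) (S T' : Finset (ZMod (p ^ k)))
    (hST' : IsFormallyDual S T') (hSnp : ¬ InProperCoset S) (hT'np : ¬ InProperCoset T')
    (hcard : S.card = p ^ l) (hl : 2 * l ≤ k) :
    nuW S 1 = 1 := by
  classical
  obtain ⟨hS, hT, hd1, hd2⟩ := hST'
  have hp : p.Prime := Fact.out
  have hn1 : 1 < p ^ k := by
    calc 1 < p := hp.one_lt
    _ ≤ p ^ k := Nat.le_self_pow (by omega) p
  haveI : Fact (1 < p ^ k) := ⟨hn1⟩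
  have hnpos : 0 < p ^ k := by omega
  have hζ : IsPrimitiveRoot (zetaC (p ^ k)) (p ^ k) := by
    simpa [zetaC] using Complex.isPrimitiveRoot_exp (p ^ k) (by omega)
  have hScard : (0:ℕ) < S.card := Finset.card_pos.mpr hS
  have hTcard : (0:ℕ) < T'.card := Finset.card_pos.mpr hT
  set c : ℂ := (T'.card : ℂ) ^ 2 / (S.card : ℂ) with hc
  have hcne : c ≠ 0 := by
    apply div_ne_zero
    · exact pow_ne_zero _ (Nat.cast_ne_zero.mpr hTcard.ne')
    · exact Nat.cast_ne_zero.mpr hScard.ne'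
  -- key: the weight enumerator is constant on units
  have key : ∀ u : ZMod (p ^ k), IsUnit u → nuW S u = nuW S 1 := by
    intro u hu
    have hco : Nat.Coprime u.val (p ^ k) := by
      have := ZMod.val_coe_unit_coprime hu.unit
      rwa [hu.unit_spec] at this
    have hz' : IsPrimitiveRoot (zetaC (p ^ k) ^ u.val) (p ^ k) :=
      hζ.pow_of_coprime u.val hco
    set q : ℚ := ((T'.card : ℚ) ^ 2 / (S.card : ℚ)) * (nuW S 1 : ℚ) with hqdef
    have hq : (q : ℂ) = c * (nuW S 1 : ℂ) := by push_cast [hqdef, hc]; ring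
    set Q : Polynomial ℚ :=
      (∑ v : ZMod (p ^ k), Polynomial.C ((nuW T' v : ℚ)) * Polynomial.X ^ v.val)
        - Polynomial.C q with hQ
    have haevalQ : ∀ z : ℂ, Polynomial.aeval z Q =
        (∑ v : ZMod (p ^ k), (nuW T' v : ℂ) * z ^ v.val) - (q : ℂ) := by
      intro z
      simp [hQ, map_sub, map_sum, map_mul, map_pow]
    have h0 : Polynomial.aeval (zetaC (p ^ k)) Q = 0 := by
      rw [haevalQ, sub_eq_zero, hq]
      have := hd2 1
      rw [ZMod.val_one] at this
      simpa [mul_one] using this.symm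
    have h1 := aux_root (p ^ k) hnpos Q _ _ hζ hz' h0
    rw [haevalQ, sub_eq_zero, hq] at h1
    have h2 : c * (nuW S u : ℂ) = c * (nuW S 1 : ℂ) := by
      rw [hd2 u, ← h1]
      apply Finset.sum_congr rfl
      intro v _
      rw [← pow_mul, Nat.mul_comm]
    have := mul_left_cancel₀ hcne h2
    exact_mod_cast this
  -- counting facts
  have hsum : ∑ v : ZMod (p ^ k), nuW S v = S.card ^ 2 := by
    rw [sq, ← Finset.card_product]
    exact (Finset.card_eq_sum_card_fiberwise (fun x _ => Finset.mem_univ _)).symm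
  have hzero : nuW S 0 = S.card := by
    have : ((S ×ˢ S).filter (fun p => p.1 - p.2 = 0)) = S.diag := by
      ext x
      simp only [Finset.mem_filter, Finset.mem_product, Finset.mem_diag, sub_eq_zero]
      constructor
      · rintro ⟨⟨h1, h2⟩, h3⟩; exact ⟨h1, h3⟩
      · rintro ⟨h1, h2⟩; exact ⟨⟨h1, h2 ▸ h1⟩, h2⟩
    rw [nuW, this, Finset.diag_card]
  -- upper bound: nuW S 1 ≤ 1
  have hub : nuW S 1 ≤ 1 := by
    set U : Finset (ZMod (p ^ k)) := Finset.univ.filter (fun y => IsUnit y) with hU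
    have hUcard : (p ^ k).totient ≤ U.card := by
      rw [← ZMod.card_units_eq_totient (p ^ k), ← Finset.card_univ]
      refine Finset.card_le_card_of_injOn (fun u => (u : ZMod (p ^ k))) ?_ ?_
      · intro u _; simp [hU]
      · intro a _ b _ h; exact Units.ext h
    have hsumU : ∑ y ∈ U, nuW S y = U.card * nuW S 1 := by
      rw [Finset.sum_congr rfl (fun y hy => key y (Finset.mem_filter.mp hy).2),
        Finset.sum_const, smul_eq_mul]
    have hUsub : U ⊆ Finset.univ.erase 0 := by
      intro y hy
      rcases Finset.mem_filter.mp hy with ⟨_, hyu⟩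
      refine Finset.mem_erase.mpr ⟨?_, Finset.mem_univ _⟩
      rintro rfl
      exact zero_ne_one (isUnit_zero_iff.mp hyu)
    have hle : ∑ y ∈ U, nuW S y ≤ S.card ^ 2 - S.card := by
      have h1 : ∑ y ∈ U, nuW S y ≤ ∑ y ∈ Finset.univ.erase 0, nuW S y :=
        Finset.sum_le_sum_of_subset hUsub
      have h2 : nuW S 0 + ∑ y ∈ Finset.univ.erase 0, nuW S y = S.card ^ 2 := by
        rw [Finset.add_sum_erase _ _ (Finset.mem_univ 0), hsum]
      rw [hzero] at h2
      omega
    have htot : (p ^ k).totient = p ^ (k - 1) * (p - 1) :=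
      Nat.totient_prime_pow hp (by omega)
    have hfinal : p ^ (k - 1) * (p - 1) * nuW S 1 < p ^ k := by
      calc p ^ (k - 1) * (p - 1) * nuW S 1 ≤ U.card * nuW S 1 := by
            exact Nat.mul_le_mul_right _ (htot ▸ hUcard)
        _ = ∑ y ∈ U, nuW S y := hsumU.symm
        _ ≤ S.card ^ 2 - S.card := hle
        _ < S.card ^ 2 := by
            have h1' := hScard
            have h2' : 0 < S.card ^ 2 := by positivity
            omega
        _ = p ^ (2 * l) := by rw [hcard, ← pow_mul, Nat.mul_comm]
        _ ≤ p ^ k := Nat.pow_le_pow_right hp.pos hl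
    have hpk : p ^ k = p ^ (k - 1) * p := by
      conv_lhs => rw [show k = (k - 1) + 1 by omega]
      rw [pow_succ]
    have hfinal2 : p ^ (k - 1) * ((p - 1) * nuW S 1) < p ^ (k - 1) * p := by
      rw [← Nat.mul_assoc, ← hpk]
      exact hfinal
    have h9 : (p - 1) * nuW S 1 < p := Nat.lt_of_mul_lt_mul_left hfinal2
    have h2p : 2 ≤ p := hp.two_le
    by_contra hcon
    push_neg at hcon
    have h10 : (p - 1) * 2 ≤ (p - 1) * nuW S 1 :=
      Nat.mul_le_mul_left (p - 1) (by omega)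
    omega
  -- lower bound: nuW S 1 ≥ 1
  have hlb : 1 ≤ nuW S 1 := by
    by_contra hcon
    have h1z : nuW S 1 = 0 := by omega
    apply hSnp
    obtain ⟨c₀, hc₀⟩ := hS
    refine ⟨AddSubgroup.zmultiples (p : ZMod (p ^ k)), ?_, c₀, ?_⟩
    · intro htop
      have h1mem : (1 : ZMod (p ^ k)) ∈ AddSubgroup.zmultiples (p : ZMod (p ^ k)) := by
        rw [htop]; exact AddSubgroup.mem_top _
      obtain ⟨z, hz⟩ := AddSubgroup.mem_zmultiples_iff.mp h1mem
      have hmap := congrArg (ZMod.castHom (dvd_pow_self p (by omega : k ≠ 0)) (ZMod p)) hz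
      rw [map_zsmul, map_one, map_natCast, ZMod.natCast_self, smul_zero] at hmap
      exact one_ne_zero hmap.symm
    · intro x hx
      have hnu : 1 ≤ nuW S (x - c₀) := by
        apply Finset.card_pos.mpr
        exact ⟨(x, c₀), by simp [Finset.mem_filter, Finset.mem_product, hx, hc₀]⟩
      have hnotunit : ¬ IsUnit (x - c₀) := by
        intro hu
        rw [key _ hu, h1z] at hnu
        omega
      have hdvd : p ∣ (x - c₀).val := by
        by_contra hnd
        apply hnotunit
        have hco0 : Nat.Coprime p (x - c₀).val := hp.coprime_iff_not_dvd.mpr hnd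
        have hco : Nat.Coprime (x - c₀).val (p ^ k) := Nat.Coprime.pow_right k hco0.symm
        have := (ZMod.isUnit_iff_coprime (x - c₀).val (p ^ k)).mpr hco
        rwa [ZMod.natCast_val, ZMod.cast_id] at this
      obtain ⟨m, hm⟩ := hdvd
      rw [AddSubgroup.mem_zmultiples_iff]
      refine ⟨(m : ℤ), ?_⟩
      have : ((x - c₀).val : ZMod (p ^ k)) = x - c₀ := by
        rw [ZMod.natCast_val, ZMod.cast_id]
      rw [← this, hm, zsmul_eq_mul]
      push_cast
      ring
  omega
end
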